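/- Let φ = dF : U → ℂ^{2n} be the Kählerian Lagrangian immersion defined by a holomorphic function F on a simply connected open set U ⊂ ℂ^n with det Im ∂²F ≠ 0. Then the induced metric g = Re φ*γ is given in the holomorphic coordinates z^i by g = Σ_{i,j} Im(∂²F/∂z^i∂z^j) dz^i · dz̄^j (up to a universal positive constant), i.e., the Kähler potential is K = Im Σ z̄^i ∂F/∂z^i (up to constants). -/

import Mathlib

/-! Since `dφ_z a = (a, a ᵥ* ∂²F)`, pulling `γ` back along the graph of a symmetric matrix `H`
gives `i Σ a_i b̄_j (H̄_ij - H_ij) = 2 Σ Im H_ij a_i b̄_j`. The one analytic input is the symmetry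
of the holomorphic Hessian, i.e. that a holomorphic function of several variables is `C²`. Each
directional derivative `w ↦ f'(w) e` is the Cauchy integral `(2πi)⁻¹ ∮ f(w + t e) / t² dt`, which
can be differentiated under the integral sign because the Cauchy estimate `‖f'‖ ≤ M / r` bounds the
derivative of the integrand; iterating, `f` is `Cⁿ` for every `n`. -/

noncomputable section

/-- `V = ℂ^{2n} = T*ℂ^n` with coordinates `(z, w)`. -/
abbrev Vsp (n : ℕ) := (Fin n → ℂ) × (Fin n → ℂ)

/-- The canonical complex symplectic form `Ω = Σ dz^i ∧ dw_i`. -/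
def Omg (n : ℕ) (u v : Vsp n) : ℂ := ∑ i, (u.1 i * v.2 i - u.2 i * v.1 i)

/-- Complex conjugation with respect to the real form `ℝ^{2n}`. -/
def tauC (n : ℕ) (v : Vsp n) : Vsp n :=
  (fun i => starRingEnd ℂ (v.1 i), fun i => starRingEnd ℂ (v.2 i))

/-- The Hermitian form `γ(u,v) = i·Ω(u, τ v)`. -/
def gammaH (n : ℕ) (u v : Vsp n) : ℂ := Complex.I * Omg n u (tauC n v)

/-- The differential `dφ_z` of `φ = dF` applied to a tangent vector `a ∈ ℂ^n`. -/
def dphiF (n : ℕ) (F : (Fin n → ℂ) → ℂ) (z : Fin n → ℂ) (a : Fin n → ℂ) : Vsp n :=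
  (a, fun i => fderiv ℂ (fun w => fderiv ℂ F w (Pi.single i 1)) z a)

/-- The holomorphic Hessian matrix `∂²F = (∂²F/∂z^i∂z^j)` of `F` at `z`. -/
def hessF (n : ℕ) (F : (Fin n → ℂ) → ℂ) (z : Fin n → ℂ) : Matrix (Fin n) (Fin n) ℂ :=
  fun i j => fderiv ℂ (fun w => fderiv ℂ F w (Pi.single j 1)) z (Pi.single i 1)

open Complex Metric Matrix
open scoped Real Topology ComplexConjugate

section Holomorphic

variable {E G : Type*} [NormedAddCommGroup E] [NormedSpace ℂ E]
  [NormedAddCommGroup G] [NormedSpace ℂ G] {f : E → G} {U : Set E}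

theorem DifferentiableAt.hasDerivAt_comp_add_smul {x c : E} {t : ℂ}
    (hf : DifferentiableAt ℂ f (x + t • c)) :
    HasDerivAt (fun s : ℂ => f (x + s • c)) (fderiv ℂ f (x + t • c) c) t := by
  simpa [Function.comp_def] using
    hf.hasFDerivAt.comp_hasDerivAt t (((hasDerivAt_id t).smul_const c).const_add x)

theorem DifferentiableOn.norm_fderiv_le_of_forall_mem_closedBall_norm_le
    (hf : DifferentiableOn ℂ f U) (hU : IsOpen U) {x : E} {r M : ℝ} (hr : 0 < r)
    (hxU : closedBall x r ⊆ U) (hM : ∀ y ∈ closedBall x r, ‖f y‖ ≤ M) :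
    ‖fderiv ℂ f x‖ ≤ M / r := by
  have hM0 : 0 ≤ M := (norm_nonneg _).trans (hM x (mem_closedBall_self hr.le))
  refine ContinuousLinearMap.opNorm_le_of_unit_norm (div_nonneg hM0 hr.le) fun c hc => ?_
  have hline : ∀ t ∈ closedBall (0 : ℂ) r, x + t • c ∈ closedBall x r := by
    intro t ht
    simpa [norm_smul, hc] using ht
  have hderiv : ∀ t ∈ closedBall (0 : ℂ) r,
      HasDerivAt (fun s : ℂ => f (x + s • c)) (fderiv ℂ f (x + t • c) c) t := fun t ht =>
    (hf.differentiableAt (hU.mem_nhds (hxU (hline t ht)))).hasDerivAt_comp_add_smul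
  have hD : DiffContOnCl ℂ (fun t : ℂ => f (x + t • c)) (ball 0 r) := by
    refine DifferentiableOn.diffContOnCl ?_
    rw [closure_ball _ hr.ne']
    exact fun t ht => (hderiv t ht).differentiableAt.differentiableWithinAt
  have := Complex.norm_deriv_le_of_forall_mem_sphere_norm_le hr hD
    fun t ht => hM _ (hline t (sphere_subset_closedBall ht))
  simpa [(hderiv 0 (mem_closedBall_self hr.le)).deriv] using this

variable [CompleteSpace G]

theorem DifferentiableOn.fderiv_apply_eq_cderiv (hf : DifferentiableOn ℂ f U) (hU : IsOpen U)
    {x e : E} {r : ℝ} (hr : 0 < r) (hxU : ∀ t ∈ closedBall (0 : ℂ) r, x + t • e ∈ U) :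
    fderiv ℂ f x e = cderiv r (fun t : ℂ => f (x + t • e)) 0 := by
  have hslice : DifferentiableOn ℂ (fun t : ℂ => f (x + t • e)) ((fun t : ℂ => x + t • e) ⁻¹' U) :=
    fun t ht => (hf.differentiableAt (hU.mem_nhds ht)).hasDerivAt_comp_add_smul
      |>.differentiableAt.differentiableWithinAt
  rw [cderiv_eq_deriv (hU.preimage (by fun_prop)) hslice hr hxU]
  have h0 : x + (0 : ℂ) • e ∈ U := hxU 0 (mem_closedBall_self hr.le)
  simpa using ((hf.differentiableAt (hU.mem_nhds h0)).hasDerivAt_comp_add_smul).deriv.symm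

theorem DifferentiableOn.differentiableAt_cderiv_comp_add_smul [FiniteDimensional ℂ E]
    [SecondCountableTopology G] (hf : DifferentiableOn ℂ f U) (hU : IsOpen U) {x e : E}
    {r C : ℝ} (hr : 0 < r) {s : Set E} (hs : s ∈ 𝓝 x)
    (hsU : ∀ w ∈ s, ∀ t ∈ sphere (0 : ℂ) r, w + t • e ∈ U)
    (hC : ∀ w ∈ s, ∀ t ∈ sphere (0 : ℂ) r, ‖fderiv ℂ f (w + t • e)‖ ≤ C) :
    DifferentiableAt ℂ (fun w => cderiv r (fun t : ℂ => f (w + t • e)) 0) x := by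
  borelize E
  set k : ℝ → ℂ := fun θ => circleMap 0 r θ * I * (circleMap 0 r θ ^ 2)⁻¹
  have hk : Continuous k :=
    ((continuous_circleMap 0 r).mul continuous_const).mul
      (((continuous_circleMap 0 r).pow 2).inv₀ fun θ => pow_ne_zero 2 (circleMap_ne_center hr.ne'))
  have hk_norm : ∀ θ, ‖k θ‖ = r⁻¹ := by
    intro θ
    simp only [k, norm_mul, norm_circleMap_zero, abs_of_pos hr, norm_I, mul_one, norm_inv,
      norm_pow]
    field_simp
  have hmem : ∀ w ∈ s, ∀ θ, w + circleMap 0 r θ • e ∈ U := fun w hw θ =>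
    hsU w hw _ (circleMap_mem_sphere 0 hr.le θ)
  have hcont : ∀ w ∈ s, Continuous fun θ => k θ • f (w + circleMap 0 r θ • e) := fun w hw =>
    hk.smul (hf.continuousOn.comp_continuous (by fun_prop) (hmem w hw))
  have hint := intervalIntegral.hasFDerivAt_integral_of_dominated_of_fderiv_le
    (F := fun w θ => k θ • f (w + circleMap 0 r θ • e))
    (F' := fun w θ => k θ • fderiv ℂ f (w + circleMap 0 r θ • e))
    (bound := fun _ => r⁻¹ * C) (μ := MeasureTheory.volume) (a := 0) (b := 2 * π) hs
    (Filter.mem_of_superset hs fun w hw => (hcont w hw).aestronglyMeasurable)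
    ((hcont x (mem_of_mem_nhds hs)).intervalIntegrable _ _)
    (hk.aestronglyMeasurable.smul
      ((measurable_fderiv ℂ f).comp (by fun_prop : Continuous _).measurable).aestronglyMeasurable)
    (MeasureTheory.ae_of_all _ fun θ _ w hw => by
      rw [norm_smul, hk_norm]
      gcongr
      exact hC w hw _ (circleMap_mem_sphere 0 hr.le θ))
    intervalIntegrable_const
    (MeasureTheory.ae_of_all _ fun θ _ w hw =>
      ((hf.differentiableAt (hU.mem_nhds (hmem w hw θ))).hasFDerivAt.comp w
        ((hasFDerivAt_id w).add_const _)).const_smul (k θ))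
  simp only [cderiv, circleIntegral, deriv_circleMap, sub_zero, smul_smul]
  exact hint.differentiableAt.const_smul _

variable [FiniteDimensional ℂ E] [SecondCountableTopology G]

theorem DifferentiableOn.differentiableOn_fderiv_apply (hf : DifferentiableOn ℂ f U)
    (hU : IsOpen U) (e : E) : DifferentiableOn ℂ (fun w => fderiv ℂ f w e) U := by
  intro x hx
  obtain ⟨δ, hδ, hδU⟩ : ∃ δ > 0, closedBall x (3 * δ) ⊆ U := by
    obtain ⟨ε, hε, hεU⟩ := Metric.isOpen_iff.1 hU x hx
    exact ⟨ε / 4, by positivity, (closedBall_subset_ball (by linarith)).trans hεU⟩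
  obtain ⟨M, hM⟩ := (isCompact_closedBall x (3 * δ)).exists_bound_of_continuousOn
    (hf.continuousOn.mono hδU)
  set r := δ / (‖e‖ + 1)
  have hr : 0 < r := by positivity
  have hnear : ∀ w ∈ ball x δ, ∀ t ∈ closedBall (0 : ℂ) r, w + t • e ∈ closedBall x (2 * δ) := by
    intro w hw t ht
    have hre : r * ‖e‖ ≤ δ := by
      rw [div_mul_eq_mul_div, div_le_iff₀ (by positivity)]
      nlinarith
    rw [mem_closedBall, dist_eq_norm, add_sub_right_comm]
    calc ‖w - x + t • e‖ ≤ ‖w - x‖ + ‖t‖ * ‖e‖ := (norm_add_le _ _).trans_eq (by rw [norm_smul])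
      _ ≤ δ + r * ‖e‖ := by
        gcongr
        · exact (mem_ball_iff_norm.1 hw).le
        · exact mem_closedBall_zero_iff.1 ht
      _ ≤ 2 * δ := by linarith
  have hfderiv : ∀ y ∈ closedBall x (2 * δ), ‖fderiv ℂ f y‖ ≤ M / δ := fun y hy =>
    hf.norm_fderiv_le_of_forall_mem_closedBall_norm_le hU hδ
      ((closedBall_subset_closedBall' (by linarith [mem_closedBall.1 hy])).trans hδU)
      fun z hz => hM z (closedBall_subset_closedBall' (by linarith [mem_closedBall.1 hy]) hz)
  have hcauchy : (fun w => fderiv ℂ f w e) =ᶠ[𝓝 x]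
      fun w => cderiv r (fun t : ℂ => f (w + t • e)) 0 := by
    filter_upwards [ball_mem_nhds x hδ] with w hw
    exact hf.fderiv_apply_eq_cderiv hU hr fun t ht =>
      hδU (closedBall_subset_closedBall (by linarith) (hnear w hw t ht))
  refine (DifferentiableAt.congr_of_eventuallyEq ?_ hcauchy).differentiableWithinAt
  exact hf.differentiableAt_cderiv_comp_add_smul hU hr (ball_mem_nhds x hδ)
    (fun w hw t ht => hδU (closedBall_subset_closedBall (by linarith)
      (hnear w hw t (sphere_subset_closedBall ht))))
    fun w hw t ht => hfderiv _ (hnear w hw t (sphere_subset_closedBall ht))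

theorem DifferentiableOn.contDiffOn_of_isOpen (hf : DifferentiableOn ℂ f U) (hU : IsOpen U)
    (n : ℕ) : ContDiffOn ℂ n f U := by
  induction n generalizing f with
  | zero => exact contDiffOn_zero.2 hf.continuousOn
  | succ n ih =>
    push_cast
    refine contDiffOn_succ_of_fderiv_apply hf (by simp) fun y => ?_
    exact (ih (hf.differentiableOn_fderiv_apply hU y)).congr fun x hx => by
      rw [fderivWithin_of_isOpen hU hx]

theorem DifferentiableOn.fderiv_fderiv_apply_comm (hf : DifferentiableOn ℂ f U) (hU : IsOpen U)
    {x : E} (hx : x ∈ U) (u v : E) :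
    fderiv ℂ (fun w => fderiv ℂ f w v) x u = fderiv ℂ (fun w => fderiv ℂ f w u) x v := by
  have h2 : ContDiffAt ℂ 2 f x := (hf.contDiffOn_of_isOpen hU 2).contDiffAt (hU.mem_nhds hx)
  have hd : DifferentiableAt ℂ (fderiv ℂ f) x :=
    (h2.fderiv_right (m := 1) (by norm_num)).differentiableAt one_ne_zero
  rw [fderiv_clm_apply hd (differentiableAt_const v),
    fderiv_clm_apply hd (differentiableAt_const u)]
  simpa using h2.isSymmSndFDerivAt (by simp) u v

end Holomorphic

theorem hessF_isSymm {n : ℕ} {U : Set (Fin n → ℂ)} (hU : IsOpen U) {F : (Fin n → ℂ) → ℂ}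
    (hF : DifferentiableOn ℂ F U) {z : Fin n → ℂ} (hz : z ∈ U) : (hessF n F z).IsSymm :=
  Matrix.IsSymm.ext fun _ _ => hF.fderiv_fderiv_apply_comm hU hz _ _

theorem dphiF_eq_vecMul_hessF (n : ℕ) (F : (Fin n → ℂ) → ℂ) (z a : Fin n → ℂ) :
    dphiF n F z a = (a, a ᵥ* hessF n F z) := by
  refine Prod.ext rfl (funext fun i => ?_)
  simp only [dphiF, hessF, vecMul, dotProduct]
  conv_lhs => rw [pi_eq_sum_univ' a]
  simp only [map_sum, map_smul, smul_eq_mul]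

theorem Complex.I_mul_conj_sub_self (h : ℂ) : I * (conj h - h) = 2 * (h.im : ℂ) := by
  rw [← neg_sub, sub_conj]
  push_cast
  linear_combination (-2 * (h.im : ℂ)) * I_mul_I

theorem gammaH_vecMul_of_isSymm {n : ℕ} {H : Matrix (Fin n) (Fin n) ℂ} (hH : H.IsSymm)
    (a b : Fin n → ℂ) :
    gammaH n (a, a ᵥ* H) (b, b ᵥ* H) = 2 * ∑ i, ∑ j, ((H i j).im : ℂ) * a i * conj (b j) := by
  calc gammaH n (a, a ᵥ* H) (b, b ᵥ* H)
      = ∑ i, ∑ j, I * (conj (H i j) - H i j) * a i * conj (b j) := by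
        simp only [gammaH, Omg, tauC, vecMul, dotProduct, map_sum, map_mul, Finset.mul_sum,
          Finset.sum_mul, mul_sub, Finset.sum_sub_distrib]
        rw [Finset.sum_comm (f := fun x i => I * (a i * H i x * conj (b x))),
          ← Finset.sum_sub_distrib]
        refine Finset.sum_congr rfl fun i _ => ?_
        rw [← Finset.sum_sub_distrib]
        refine Finset.sum_congr rfl fun j _ => ?_
        rw [hH.apply i j]
        ring
    _ = 2 * ∑ i, ∑ j, ((H i j).im : ℂ) * a i * conj (b j) := by
        simp only [I_mul_conj_sub_self, Finset.mul_sum, mul_assoc]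

theorem Complex.re_ofReal_mul_mul_conj (x : ℝ) (a b : ℂ) :
    ((x : ℂ) * a * conj b).re = x * (a.re * b.re + a.im * b.im) := by
  simp only [mul_re, mul_im, ofReal_re, ofReal_im, conj_re, conj_im]
  ring

theorem stmt18_general (n : ℕ) (U : Set (Fin n → ℂ)) (hU : IsOpen U)
    (F : (Fin n → ℂ) → ℂ) (hF : DifferentiableOn ℂ F U)
    (z : Fin n → ℂ) (hz : z ∈ U) (a b : Fin n → ℂ) :
    gammaH n (dphiF n F z a) (dphiF n F z b)
      = 2 * ∑ i, ∑ j, (((hessF n F z i j).im : ℂ) * a i * starRingEnd ℂ (b j)) ∧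
    (gammaH n (dphiF n F z a) (dphiF n F z b)).re
      = 2 * ∑ i, ∑ j, ((hessF n F z i j).im *
          ((a i).re * (b j).re + (a i).im * (b j).im)) := by
  have hγ : gammaH n (dphiF n F z a) (dphiF n F z b)
      = 2 * ∑ i, ∑ j, (((hessF n F z i j).im : ℂ) * a i * starRingEnd ℂ (b j)) := by
    rw [dphiF_eq_vecMul_hessF, dphiF_eq_vecMul_hessF]
    exact gammaH_vecMul_of_isSymm (hessF_isSymm hU hF hz) a b
  refine ⟨hγ, ?_⟩
  simp only [hγ, ← ofReal_ofNat, re_ofReal_mul, re_sum, re_ofReal_mul_mul_conj]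

/-- For the Kählerian Lagrangian immersion `φ = dF` defined by a holomorphic `F` on a
simply connected open `U ⊂ ℂ^n` with `det Im ∂²F ≠ 0`, the induced Hermitian metric in
the holomorphic coordinates `z^i` is `φ*γ = 2 Σ Im(∂²F/∂z^i∂z^j) dz^i ⊗ dz̄^j`, and
`g = Re φ*γ = Σ Im(∂²F/∂z^i∂z^j) dz^i · dz̄^j` (up to the universal constant 2);
equivalently `K = 2 Im Σ z̄^i ∂F/∂z^i` is a Kähler potential for `g`. -/
theorem stmt18 (n : ℕ) (U : Set (Fin n → ℂ)) (hU : IsOpen U) (hUc : SimplyConnectedSpace U)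
    (F : (Fin n → ℂ) → ℂ) (hF : DifferentiableOn ℂ F U)
    (hnd : ∀ z ∈ U, Matrix.det ((hessF n F z).map Complex.im) ≠ 0)
    (z : Fin n → ℂ) (hz : z ∈ U) (a b : Fin n → ℂ) :
    gammaH n (dphiF n F z a) (dphiF n F z b)
      = 2 * ∑ i, ∑ j, (((hessF n F z i j).im : ℂ) * a i * starRingEnd ℂ (b j)) ∧
    (gammaH n (dphiF n F z a) (dphiF n F z b)).re
      = 2 * ∑ i, ∑ j, ((hessF n F z i j).im *
          ((a i).re * (b j).re + (a i).im * (b j).im)) :=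
  stmt18_general n U hU F hF z hz a b
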